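/- For parameters α ∈ [0,1], β ∈ (0,1], ν > α−1, the map from ℂ to ℓ²(ℕ,ℂ) sending z to the normalized coherent state |z⟩ with coefficients ⟨n|z⟩ = N_{α,β,ν}(|z|²)^{−1/2} · z^n / √([n]_{α,β,ν}!) is well defined (the coefficient sequence is square-summable with unit norm) and continuous in z. -/

import Mathlib

open Filter Real Set FormalMultilinearSeries
open scoped Topology InnerProductSpace ComplexConjugate

/-- The generalized factorial `[n]_{α,β,ν}!`. -/
noncomputable def genFact (α β ν : ℝ) (n : ℕ) : ℝ :=
  (∏ i ∈ Finset.Icc 1 n, Real.Gamma (β * i + 1) / Real.Gamma (β * i + 1 - α)) *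
    (Real.Gamma (β * n + 1 - α + ν) / Real.Gamma (1 - α + ν))

/-- The normalization function `N_{α,β,ν}(x) = ∑ xⁿ/[n]!`. -/
noncomputable def normFun (α β ν : ℝ) (x : ℝ) : ℝ :=
  ∑' n : ℕ, x ^ n / genFact α β ν n

/-!
Log-convexity of `Γ` gives `Γ(x + 1) ≤ (x + s) ^ (1 - s) Γ(x + s)` for `s ∈ [0, 1]`, hence
`[n+1]! / [n]! ≳ n ^ β → ∞`. So `∑ wⁿ / [n]!` is an entire power series: the vectors
`(zⁿ / √[n]!)ₙ` lie in `ℓ²`, and their Gram kernel `⟪z, w⟫ = ∑ (z̄ w)ⁿ / [n]!` is continuous.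
A map into a Hilbert space with continuous Gram kernel is continuous, and since the vectors
never vanish, so is its normalisation.
-/

namespace Real

theorem Gamma_add_one_le_rpow_mul_Gamma_add {x s : ℝ} (hx : 0 < x) (hs₀ : 0 ≤ s) (hs₁ : s ≤ 1) :
    Gamma (x + 1) ≤ (x + s) ^ (1 - s) * Gamma (x + s) := by
  have hxs : 0 < x + s := by linarith
  have hΓ : 0 < Gamma (x + s) := Gamma_pos_of_pos hxs
  have hconv := convexOn_log_Gamma.2 (mem_Ioi.2 hxs) (mem_Ioi.2 (by linarith : 0 < x + s + 1))
    hs₀ (by linarith : 0 ≤ 1 - s) (by ring)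
  have harg : s * (x + s) + (1 - s) * (x + s + 1) = x + 1 := by ring
  simp only [smul_eq_mul, Function.comp_apply, harg, Gamma_add_one hxs.ne',
    log_mul hxs.ne' hΓ.ne'] at hconv
  rw [← log_le_log_iff (Gamma_pos_of_pos (by linarith)) (by positivity),
    log_mul (by positivity) hΓ.ne', log_rpow hxs]
  linarith

theorem rpow_div_two_le_Gamma_add_div_Gamma {x s : ℝ} (hx : 1 ≤ x) (hs₀ : 0 ≤ s) (hs₁ : s ≤ 1) :
    (x + 1) ^ s / 2 ≤ Gamma (x + s) / Gamma x := by
  have hx₀ : 0 < x := by linarith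
  have hΓs : 0 < Gamma (x + s) := Gamma_pos_of_pos (by linarith)
  have hsplit : (x + 1) ^ (1 - s) * (x + 1) ^ s = x + 1 := by
    rw [← rpow_add (by linarith), sub_add_cancel, rpow_one]
  rw [div_le_div_iff₀ two_pos (Gamma_pos_of_pos hx₀)]
  refine le_of_mul_le_mul_left ?_ hx₀
  calc x * ((x + 1) ^ s * Gamma x) = Gamma (x + 1) * (x + 1) ^ s := by
        rw [Gamma_add_one hx₀.ne']; ring
    _ ≤ (x + s) ^ (1 - s) * Gamma (x + s) * (x + 1) ^ s := by
        gcongr; exact Gamma_add_one_le_rpow_mul_Gamma_add hx₀ hs₀ hs₁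
    _ ≤ (x + 1) ^ (1 - s) * Gamma (x + s) * (x + 1) ^ s := by
        gcongr
    _ = (x + 1) * Gamma (x + s) := by rw [mul_right_comm, hsplit]
    _ ≤ x * (Gamma (x + s) * 2) := by nlinarith

end Real

section GenFact

variable {α β ν : ℝ}

theorem genFact_pos (hα : α ≤ 1) (hβ : 0 < β) (hν : α - 1 < ν) (n : ℕ) :
    0 < genFact α β ν n := by
  have hβn : 0 ≤ β * n := by positivity
  refine mul_pos (Finset.prod_pos fun i hi ↦ ?_)
    (div_pos (Gamma_pos_of_pos (by linarith)) (Gamma_pos_of_pos (by linarith)))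
  have hβi : 0 < β * i := mul_pos hβ (by exact_mod_cast (Finset.mem_Icc.mp hi).1)
  exact div_pos (Gamma_pos_of_pos (by linarith)) (Gamma_pos_of_pos (by linarith))

theorem genFact_succ_div_genFact (hα : α ≤ 1) (hβ : 0 < β) (hν : α - 1 < ν) (n : ℕ) :
    genFact α β ν (n + 1) / genFact α β ν n =
      Gamma (β * (n + 1) + 1) / Gamma (β * (n + 1) + 1 - α) *
        (Gamma (β * (n + 1) + 1 - α + ν) / Gamma (β * n + 1 - α + ν)) := by
  have hβn : 0 ≤ β * n := by positivity
  have hΓ₀ : Gamma (1 - α + ν) ≠ 0 := (Gamma_pos_of_pos (by linarith)).ne'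
  have hΓn : Gamma (β * n + 1 - α + ν) ≠ 0 := (Gamma_pos_of_pos (by linarith)).ne'
  have hΓα : Gamma (β * (n + 1) + 1 - α) ≠ 0 := (Gamma_pos_of_pos (by linarith)).ne'
  rw [div_eq_iff (genFact_pos hα hβ hν n).ne', genFact, genFact,
    Finset.prod_Icc_succ_top (by omega)]
  push_cast
  field_simp

theorem tendsto_genFact_succ_div_genFact (hα₀ : 0 ≤ α) (hα₁ : α ≤ 1) (hβ₀ : 0 < β)
    (hβ₁ : β ≤ 1) (hν : α - 1 < ν) :
    Tendsto (fun n : ℕ ↦ genFact α β ν (n + 1) / genFact α β ν n) atTop atTop := by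
  have hlin (c : ℝ) : Tendsto (fun n : ℕ ↦ β * n + c) atTop atTop :=
    tendsto_atTop_add_const_right _ c (tendsto_natCast_atTop_atTop.const_mul_atTop hβ₀)
  set x : ℕ → ℝ := fun n ↦ β * (n + 1) + 1 - α
  set y : ℕ → ℝ := fun n ↦ β * n + 1 - α + ν
  have hx : Tendsto x atTop atTop := (hlin (β + 1 - α)).congr fun n ↦ by simp only [x]; ring
  have hy : Tendsto y atTop atTop := (hlin (1 - α + ν)).congr fun n ↦ by simp only [y]; ring
  have hbound : ∀ᶠ n in atTop,
      (y n + 1) ^ β / 4 ≤ genFact α β ν (n + 1) / genFact α β ν n := by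
    filter_upwards [hx.eventually_ge_atTop 1, hy.eventually_ge_atTop 1] with n hxn hyn
    have hA : 1 / 2 ≤ Gamma (x n + α) / Gamma (x n) :=
      le_trans (by linarith [one_le_rpow (by linarith : 1 ≤ x n + 1) hα₀])
        (rpow_div_two_le_Gamma_add_div_Gamma hxn hα₀ hα₁)
    have hB := rpow_div_two_le_Gamma_add_div_Gamma hyn hβ₀.le hβ₁
    calc (y n + 1) ^ β / 4 = 1 / 2 * ((y n + 1) ^ β / 2) := by ring
      _ ≤ Gamma (x n + α) / Gamma (x n) * (Gamma (y n + β) / Gamma (y n)) :=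
        mul_le_mul hA hB (by positivity) (by linarith)
      _ = _ := by
        rw [genFact_succ_div_genFact hα₁ hβ₀ hν n]
        simp only [x, y]
        ring_nf
  refine tendsto_atTop_mono' _ hbound ?_
  exact ((tendsto_rpow_atTop hβ₀).comp (tendsto_atTop_add_const_right _ 1 hy)).atTop_div_const
    (by norm_num)

end GenFact

theorem continuous_of_continuous_inner {X 𝕜 E : Type*} [TopologicalSpace X] [RCLike 𝕜]
    [NormedAddCommGroup E] [InnerProductSpace 𝕜 E] {f : X → E}
    (h : Continuous fun p : X × X ↦ ⟪f p.1, f p.2⟫_𝕜) : Continuous f := by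
  rw [continuous_iff_continuousAt]
  intro x₀
  have hre (g : X → X × X) (hg : Continuous g) :
      Continuous fun x ↦ RCLike.re ⟪f (g x).1, f (g x).2⟫_𝕜 :=
    RCLike.continuous_re.comp (h.comp hg)
  have hsq : Continuous fun x ↦ ‖f x - f x₀‖ ^ 2 := by
    simp only [@norm_sub_sq 𝕜, ← @inner_self_eq_norm_sq 𝕜]
    exact ((hre _ (continuous_id.prodMk continuous_id)).sub
      (continuous_const.mul (hre _ (continuous_id.prodMk continuous_const)))).add continuous_const
  have hsq₀ : Tendsto (fun x ↦ ‖f x - f x₀‖ ^ 2) (𝓝 x₀) (𝓝 0) := by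
    simpa using hsq.tendsto x₀
  rw [ContinuousAt, tendsto_iff_norm_sub_tendsto_zero]
  simpa [Function.comp_def, sqrt_sq (norm_nonneg _)] using (continuous_sqrt.tendsto 0).comp hsq₀

section CoherentState

variable {ρ : ℕ → ℝ}

theorem radius_ofScalars_inv_eq_top (hρ : ∀ n, 0 < ρ n)
    (hratio : Tendsto (fun n ↦ ρ (n + 1) / ρ n) atTop atTop) :
    (ofScalars ℂ fun n ↦ (ρ n : ℂ)⁻¹).radius = ⊤ := by
  refine ofScalars_radius_eq_top_of_tendsto _ _ (.of_forall fun n ↦ by simp [(hρ n).ne']) ?_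
  refine hratio.inv_tendsto_atTop.congr fun n ↦ ?_
  simp [abs_of_pos (hρ n), abs_of_pos (hρ (n + 1)), div_eq_mul_inv, mul_comm]

theorem summable_pow_div_of_tendsto_ratio (hρ : ∀ n, 0 < ρ n)
    (hratio : Tendsto (fun n ↦ ρ (n + 1) / ρ n) atTop atTop) {x : ℝ} (hx : 0 ≤ x) :
    Summable fun n ↦ x ^ n / ρ n := by
  have h := (ofScalars ℂ fun n ↦ (ρ n : ℂ)⁻¹).summable_norm_apply (x := (x : ℂ))
    (by simp [radius_ofScalars_inv_eq_top hρ hratio])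
  refine h.congr fun n ↦ ?_
  simp [abs_of_pos (hρ n), abs_of_nonneg hx, div_eq_mul_inv]

theorem continuous_tsum_pow_div_of_tendsto_ratio (hρ : ∀ n, 0 < ρ n)
    (hratio : Tendsto (fun n ↦ ρ (n + 1) / ρ n) atTop atTop) :
    Continuous fun w : ℂ ↦ ∑' n, w ^ n / ρ n := by
  have h := (ofScalars ℂ fun n ↦ (ρ n : ℂ)⁻¹).continuousOn
  rw [radius_ofScalars_inv_eq_top hρ hratio, Metric.eball_top, continuousOn_univ] at h
  convert h using 1
  ext w
  exact tsum_congr fun n ↦ by simp [div_eq_mul_inv]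

variable (ρ) in
noncomputable def coherentCoeff (z : ℂ) (n : ℕ) : ℂ := z ^ n / (√(ρ n) : ℂ)

theorem norm_coherentCoeff_sq {n : ℕ} (hρ : 0 ≤ ρ n) (z : ℂ) :
    ‖coherentCoeff ρ z n‖ ^ 2 = (‖z‖ ^ 2) ^ n / ρ n := by
  rw [coherentCoeff, norm_div, norm_pow, Complex.norm_real, norm_of_nonneg (sqrt_nonneg _),
    div_pow, sq_sqrt hρ, pow_right_comm]

theorem memℓp_coherentCoeff (hρ : ∀ n, 0 < ρ n)
    (hratio : Tendsto (fun n ↦ ρ (n + 1) / ρ n) atTop atTop) (z : ℂ) :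
    Memℓp (coherentCoeff ρ z) 2 := by
  refine memℓp_gen ?_
  simpa [norm_coherentCoeff_sq (hρ _).le] using
    summable_pow_div_of_tendsto_ratio hρ hratio (sq_nonneg ‖z‖)

noncomputable def coherentVector (hρ : ∀ n, 0 < ρ n)
    (hratio : Tendsto (fun n ↦ ρ (n + 1) / ρ n) atTop atTop) (z : ℂ) : lp (fun _ : ℕ ↦ ℂ) 2 :=
  ⟨coherentCoeff ρ z, memℓp_coherentCoeff hρ hratio z⟩

variable (hρ : ∀ n, 0 < ρ n) (hratio : Tendsto (fun n ↦ ρ (n + 1) / ρ n) atTop atTop)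

theorem coherentVector_apply (z : ℂ) (n : ℕ) :
    (coherentVector hρ hratio z : ℕ → ℂ) n = z ^ n / (√(ρ n) : ℂ) := rfl

theorem coherentVector_ne_zero (z : ℂ) : coherentVector hρ hratio z ≠ 0 := by
  intro h
  have h₀ := congrArg (fun v : lp (fun _ : ℕ ↦ ℂ) 2 ↦ (v : ℕ → ℂ) 0) h
  exact (sqrt_pos.2 (hρ 0)).ne' (by simpa [coherentVector_apply] using h₀)

theorem inner_coherentVector (z w : ℂ) :
    ⟪coherentVector hρ hratio z, coherentVector hρ hratio w⟫_ℂ = ∑' n, (conj z * w) ^ n / ρ n := by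
  rw [lp.inner_eq_tsum]
  refine tsum_congr fun n ↦ ?_
  rw [coherentVector_apply, coherentVector_apply, RCLike.inner_apply', map_div₀, map_pow,
    Complex.conj_ofReal, div_mul_div_comm, ← mul_pow, ← Complex.ofReal_mul,
    mul_self_sqrt (hρ n).le]

theorem norm_coherentVector (z : ℂ) :
    ‖coherentVector hρ hratio z‖ = √(∑' n, (‖z‖ ^ 2) ^ n / ρ n) := by
  have h := lp.norm_rpow_eq_tsum (p := 2) (by norm_num) (coherentVector hρ hratio z)
  rw [← sqrt_sq (norm_nonneg _)]
  simpa [coherentVector, norm_coherentCoeff_sq (hρ _).le] using congrArg sqrt h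

theorem continuous_coherentVector : Continuous (coherentVector hρ hratio) := by
  refine continuous_of_continuous_inner (𝕜 := ℂ) ?_
  simp_rw [inner_coherentVector]
  exact (continuous_tsum_pow_div_of_tendsto_ratio hρ hratio).comp
    ((Complex.continuous_conj.comp continuous_fst).mul continuous_snd)

end CoherentState

theorem exists_continuous_normalized_coherentState {ρ : ℕ → ℝ} (hρ : ∀ n, 0 < ρ n)
    (hratio : Tendsto (fun n ↦ ρ (n + 1) / ρ n) atTop atTop) :
    ∃ F : ℂ → lp (fun _ : ℕ ↦ ℂ) 2, Continuous F ∧ (∀ z, ‖F z‖ = 1) ∧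
      ∀ z n, (F z : ℕ → ℂ) n = (√(∑' k, (‖z‖ ^ 2) ^ k / ρ k) : ℂ)⁻¹ * (z ^ n / (√(ρ n) : ℂ)) := by
  set v := coherentVector hρ hratio
  have hv₀ := coherentVector_ne_zero hρ hratio
  refine ⟨fun z ↦ (‖v z‖ : ℂ)⁻¹ • v z, ?_, fun z ↦ norm_smul_inv_norm (hv₀ z), fun z n ↦ ?_⟩
  · have hv := continuous_coherentVector hρ hratio
    exact ((Complex.continuous_ofReal.comp hv.norm).inv₀ fun z ↦ by simpa using hv₀ z).smul hv
  · simp [v, norm_coherentVector hρ hratio, coherentVector_apply]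

theorem coherent_state_wellDefined_continuous (α β ν : ℝ) (hα0 : 0 ≤ α) (hα1 : α ≤ 1)
    (hβ0 : 0 < β) (hβ1 : β ≤ 1) (hν : ν > α - 1) :
    ∃ F : ℂ → lp (fun _ : ℕ => ℂ) 2,
      Continuous F ∧ (∀ z : ℂ, ‖F z‖ = 1) ∧
        ∀ (z : ℂ) (n : ℕ),
          (F z : ∀ _ : ℕ, ℂ) n =
            ((Real.sqrt (normFun α β ν (‖z‖ ^ 2)))⁻¹ : ℂ) *
              (z ^ n / (Real.sqrt (genFact α β ν n) : ℂ)) := by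
  obtain ⟨F, hF, hF₁, hFn⟩ := exists_continuous_normalized_coherentState
    (genFact_pos hα1 hβ0 hν) (tendsto_genFact_succ_div_genFact hα0 hα1 hβ0 hβ1 hν)
  exact ⟨F, hF, hF₁, fun z n ↦ by rw [hFn, normFun]⟩
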